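/- arXiv:2603.22743 — 4 statements merged into one kernel-verified Lean document; each statement's English description precedes it below -/
import Mathlib

section
/- For every k ∈ ℕ there exist compact convex sets K_1, …, K_{2k} in ℓ_∞^{2k} (ℝ^{2k} with the sup norm) such that B ∩ ⋂_{i∈J} K_i is nonempty for every J ⊆ [2k] with |J| = k (where B is the closed unit ball), yet inf_{y} max_{i∈[2k]} dist(y, K_i) ≥ k/(2k−1) ≥ 1/2. -/
open Metric

/-- The vertex vector: `-1` on `J`, `+1` off `J`. -/
def hellyVec (n : ℕ) (J : Finset (Fin n)) : Fin n → ℝ :=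
  fun t => if t ∈ J then -1 else 1

lemma hellyVec_sum (n : ℕ) (J : Finset (Fin n)) :
    ∑ t, hellyVec n J t = (n : ℝ) - 2 * J.card := by
  classical
  rw [← Finset.sum_add_sum_compl J]
  have h1 : ∑ t ∈ J, hellyVec n J t = -(J.card : ℝ) := by
    have : ∑ t ∈ J, hellyVec n J t = ∑ _t ∈ J, (-1 : ℝ) :=
      Finset.sum_congr rfl (fun t ht => by simp [hellyVec, ht])
    rw [this]; simp
  have h2 : ∑ t ∈ Jᶜ, hellyVec n J t = (Jᶜ.card : ℝ) := by
    have : ∑ t ∈ Jᶜ, hellyVec n J t = ∑ _t ∈ Jᶜ, (1 : ℝ) :=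
      Finset.sum_congr rfl (fun t ht => by
        simp only [Finset.mem_compl] at ht
        simp [hellyVec, ht])
    rw [this]; simp
  rw [h1, h2, Finset.card_compl]
  have hle : J.card ≤ n := by simpa using Finset.card_le_card (Finset.subset_univ J)
  rw [Fintype.card_fin, Nat.cast_sub hle]
  ring

/-- **Counterexample in `ℓ∞^{2k}`**: compact convex sets with the `k`-wise intersection
property inside the unit ball, all of which stay at distance at least `k/(2k-1) ≥ 1/2`
from any single point.  Here `Fin (2*k) → ℝ` carries the sup norm. -/
theorem linfty_helly_counterexample (k : ℕ) (hk : 0 < k) :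
    ∃ K : Fin (2 * k) → Set (Fin (2 * k) → ℝ),
      (∀ i, IsCompact (K i) ∧ Convex ℝ (K i)) ∧
      (∀ J : Finset (Fin (2 * k)), J.card = k →
        (closedBall (0 : Fin (2 * k) → ℝ) 1 ∩ ⋂ i ∈ J, K i).Nonempty) ∧
      ((1 : ℝ) / 2 ≤ (k : ℝ) / (2 * (k : ℝ) - 1)) ∧
      (∀ y : Fin (2 * k) → ℝ, ∃ i, (k : ℝ) / (2 * (k : ℝ) - 1) ≤ infDist y (K i)) := by
  classical
  set n := 2 * k with hn
  have hK1 : (1 : ℝ) ≤ (k : ℝ) := by exact_mod_cast hk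
  have h2k : (0 : ℝ) < 2 * (k : ℝ) - 1 := by linarith
  set c : ℝ := (k : ℝ) / (2 * (k : ℝ) - 1) with hc
  have hcval : c * (2 * (k : ℝ) - 1) = k := by
    rw [hc, div_mul_cancel₀]; exact ne_of_gt h2k
  -- generating sets
  set S : Fin n → Set (Fin n → ℝ) :=
    fun i => (fun J : Finset (Fin n) => hellyVec n J) '' {J | J.card = k ∧ i ∈ J} with hS
  set K : Fin n → Set (Fin n → ℝ) := fun i => convexHull ℝ (S i) with hKdef
  -- membership facts for K i
  have hmem : ∀ i, ∀ z ∈ K i, z i = -1 ∧ ∑ t, z t = 0 := by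
    intro i
    have : K i ⊆ {z : Fin n → ℝ | z i = -1 ∧ ∑ t, z t = 0} := by
      apply convexHull_min
      · rintro z ⟨J, ⟨hJc, hJi⟩, rfl⟩
        constructor
        · simp [hellyVec, hJi]
        · rw [hellyVec_sum, hJc, hn]; push_cast; ring
      · rintro z ⟨hz1, hz2⟩ w ⟨hw1, hw2⟩ a b ha hb hab
        constructor
        · simp only [Pi.add_apply, Pi.smul_apply, smul_eq_mul, hz1, hw1]
          ring_nf; linarith
        · simp only [Pi.add_apply, Pi.smul_apply, smul_eq_mul]
          rw [Finset.sum_add_distrib, ← Finset.mul_sum, ← Finset.mul_sum, hz2, hw2]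
          ring
    exact fun z hz => this hz
  -- existence of a k-set containing i
  have hexist : ∀ i : Fin n, (S i).Nonempty := by
    intro i
    obtain ⟨J, hJsub, hJcard⟩ := Finset.exists_superset_card_eq
      (s := ({i} : Finset (Fin n))) (n := k)
      (by simp; omega) (by simp [hn]; omega)
    exact ⟨hellyVec n J, ⟨J, ⟨hJcard, hJsub (by simp)⟩, rfl⟩⟩
  have hKne : ∀ i, (K i).Nonempty := fun i =>
    ((hexist i).mono (subset_convexHull ℝ _))
  refine ⟨K, ?_, ?_, ?_, ?_⟩
  · -- compact and convex
    intro i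
    refine ⟨?_, convex_convexHull ℝ _⟩
    have hfin : (S i).Finite := (Set.toFinite _).image _
    exact hfin.isCompact_convexHull ℝ
  · -- k-wise intersection with the ball
    intro J hJ
    refine ⟨hellyVec n J, ?_, ?_⟩
    · rw [mem_closedBall_zero_iff]
      apply pi_norm_le_iff_of_nonneg zero_le_one |>.2
      intro t
      simp only [hellyVec]
      split <;> simp
    · simp only [Set.mem_iInter]
      intro i hi
      exact subset_convexHull ℝ _ ⟨J, ⟨hJ, hi⟩, rfl⟩
  · -- 1/2 ≤ c
    rw [le_div_iff₀ h2k]; linarith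
  · -- the distance lower bound
    intro y
    by_contra hcon
    push_neg at hcon
    have hz : ∀ i : Fin n, ∃ z ∈ K i, dist y z < c := fun i =>
      (infDist_lt_iff (hKne i)).1 (hcon i)
    choose z hzK hzd using hz
    have habs : ∀ i t, |y t - z i t| < c := by
      intro i t
      have := dist_le_pi_dist y (z i) t
      rw [Real.dist_eq] at this
      linarith [hzd i]
    have hzi : ∀ i, z i i = -1 := fun i => (hmem i _ (hzK i)).1
    have hzsum : ∀ i, ∑ t, z i t = 0 := fun i => (hmem i _ (hzK i)).2
    have huniv_ne : (Finset.univ : Finset (Fin n)).Nonempty :=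
      ⟨⟨0, by omega⟩, Finset.mem_univ _⟩
    -- (a) y i < c - 1
    have hA : ∀ i, y i < c - 1 := by
      intro i
      have := habs i i
      rw [hzi i] at this
      have := (abs_lt.1 this).2
      linarith
    -- (b) ∑ y > y i + 1 - (2k-1) c
    have hB : ∀ i, y i + 1 - (2 * (k : ℝ) - 1) * c < ∑ t, y t := by
      intro i
      have hsum : (y i - z i i) + ∑ t ∈ Finset.univ.erase i, (y t - z i t) = ∑ t, y t := by
        rw [Finset.add_sum_erase _ (fun t => y t - z i t) (Finset.mem_univ i),
          Finset.sum_sub_distrib, hzsum i, sub_zero]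
      have herase_ne : (Finset.univ.erase i).Nonempty := by
        rw [← Finset.card_pos, Finset.card_erase_of_mem (Finset.mem_univ i)]
        simp [hn]; omega
      have hlt : ∑ t ∈ Finset.univ.erase i, (-c) <
          ∑ t ∈ Finset.univ.erase i, (y t - z i t) := by
        apply Finset.sum_lt_sum_of_nonempty herase_ne
        intro t _
        have := (abs_lt.1 (habs i t)).1
        linarith
      have hcard : ((Finset.univ.erase i).card : ℝ) = 2 * (k : ℝ) - 1 := by
        rw [Finset.card_erase_of_mem (Finset.mem_univ i)]
        have : (Finset.univ : Finset (Fin n)).card = n := by simp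
        rw [this]
        have : 1 ≤ n := by omega
        rw [Nat.cast_sub this, hn]
        push_cast; ring
      rw [Finset.sum_const, nsmul_eq_mul, hcard] at hlt
      rw [← hsum, hzi i]
      linarith
    set Sy : ℝ := ∑ t, y t with hSy
    have hS1 : Sy < 2 * (k : ℝ) * (c - 1) := by
      have := Finset.sum_lt_sum_of_nonempty huniv_ne (fun i _ => hA i)
      rw [← hSy] at this
      rw [Finset.sum_const, nsmul_eq_mul] at this
      have hcardu : ((Finset.univ : Finset (Fin n)).card : ℝ) = 2 * (k : ℝ) := by
        rw [Finset.card_univ, Fintype.card_fin, hn]; push_cast; ring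
      rw [hcardu] at this
      linarith
    have hS2 : Sy + 2 * (k : ℝ) - 2 * (k : ℝ) * ((2 * (k : ℝ) - 1) * c)
        < 2 * (k : ℝ) * Sy := by
      have := Finset.sum_lt_sum_of_nonempty huniv_ne (fun i _ => hB i)
      rw [Finset.sum_const, nsmul_eq_mul, Finset.sum_sub_distrib, Finset.sum_add_distrib,
        Finset.sum_const, Finset.sum_const] at this
      have hcardu : ((Finset.univ : Finset (Fin n)).card : ℝ) = 2 * (k : ℝ) := by
        rw [Finset.card_univ, Fintype.card_fin, hn]; push_cast; ring
      rw [nsmul_eq_mul, nsmul_eq_mul, hcardu, ← hSy] at this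
      simp only [mul_one] at this
      linarith
    have h3 : (2 * (k : ℝ) - 1) * Sy < (2 * (k : ℝ) - 1) * (2 * (k : ℝ) * (c - 1)) :=
      mul_lt_mul_of_pos_left hS1 h2k
    nlinarith [hcval, h3, hS2, hK1]
end

section
/- Let X be a Banach space, let ψ_1, …, ψ_n ∈ X* with ‖ψ_i‖ ≤ 1 for all i and ∑_{i=1}^n ψ_i = 0, and let K_1,…,K_n be nonempty subsets of X such that ⟨ψ_i, z⟩ ≤ −b for all z ∈ K_i, for some b > 0. Then for every y ∈ X, max_{i∈[n]} dist(y, K_i) ≥ b. -/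
open NormedSpace Metric

/-- **Averaging lower bound**: if unit-norm functionals `ψᵢ` summing to zero uniformly
separate the sets `Kᵢ` from level `-b`, then no point is within distance `< b` of all
the `Kᵢ`. -/
theorem averaging_lower_bound
    (X : Type*) [NormedAddCommGroup X] [NormedSpace ℝ X] [CompleteSpace X]
    (n : ℕ) (hn : 0 < n)
    (ψ : Fin n → StrongDual ℝ X) (hψ : ∀ i, ‖ψ i‖ ≤ 1) (hsum : ∑ i, ψ i = 0)
    (K : Fin n → Set X) (hKne : ∀ i, (K i).Nonempty)
    (b : ℝ) (hb : 0 < b)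
    (hsep : ∀ i, ∀ z ∈ K i, ψ i z ≤ -b) :
    ∀ y : X, ∃ i, b ≤ infDist y (K i) := by
  intro y
  by_contra h
  push_neg at h
  have hz : ∀ i, ∃ z ∈ K i, dist y z < b := by
    intro i
    exact (infDist_lt_iff (hKne i)).mp (h i)
  choose z hzK hzd using hz
  have hneg : ∀ i, ψ i y < 0 := by
    intro i
    have h1 : ψ i y = ψ i (z i) + ψ i (y - z i) := by
      rw [map_sub]; ring
    have h2 : ψ i (y - z i) ≤ ‖y - z i‖ := by
      calc ψ i (y - z i) ≤ ‖ψ i‖ * ‖y - z i‖ := (ψ i).le_opNorm _ |>.trans' (le_abs_self _)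
        _ ≤ 1 * ‖y - z i‖ := by
            exact mul_le_mul_of_nonneg_right (hψ i) (norm_nonneg _)
        _ = ‖y - z i‖ := one_mul _
    have h3 : ‖y - z i‖ < b := by rw [← dist_eq_norm]; exact hzd i
    have := hsep i (z i) (hzK i)
    linarith [h1, h2, h3, this]
  have hsum' : (∑ i, ψ i) y = ∑ i, ψ i y := by
    simp
  rw [hsum] at hsum'
  simp at hsum'
  have : (∑ i, ψ i y) < 0 :=
    Finset.sum_neg (fun i _ => hneg i) (Finset.univ_nonempty_iff.mpr (Fin.pos_iff_nonempty.mp hn))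
  linarith [hsum'.symm ▸ this]
end

section
/- Let g_1, …, g_m : E → ℝ be convex continuous functions on a finite-dimensional normed space E, let g = max{g_1,…,g_m}, and let x be a point. Then the subdifferential satisfies ∂g(x) = conv(⋃_{j ∈ I(x)} ∂g_j(x)), where I(x) = {j ∈ [m] : g_j(x) = g(x)} is the set of active indices. -/
open NormedSpace

/-- The subdifferential of a convex function `g : E → ℝ` at `x`. -/
def subdiff {E : Type*} [NormedAddCommGroup E] [NormedSpace ℝ E]
    (g : E → ℝ) (x : E) : Set (StrongDual ℝ E) :=
  {ψ : StrongDual ℝ E | ∀ y : E, g x + ψ (y - x) ≤ g y}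

section Aux

open Set Pointwise Filter

variable {E : Type*} [NormedAddCommGroup E] [NormedSpace ℝ E]

noncomputable def DQ (g : E → ℝ) (x v : E) (t : ℝ) : ℝ := (g (x + t • v) - g x) / t

theorem DQ_mono {g : E → ℝ} (hg : ConvexOn ℝ Set.univ g) (x v : E) {s t : ℝ}
    (hs : 0 < s) (hst : s ≤ t) : DQ g x v s ≤ DQ g x v t := by
  have ht : 0 < t := hs.trans_le hst
  have ha : (0:ℝ) ≤ 1 - s / t := by
    have : s / t ≤ 1 := (div_le_one ht).2 hst
    linarith
  have hb : (0:ℝ) ≤ s / t := by positivity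
  have key := hg.2 (mem_univ x) (mem_univ (x + t • v)) ha hb (by ring)
  have hcomb : (1 - s / t) • x + (s / t) • (x + t • v) = x + s • v := by
    rw [smul_add, smul_smul, div_mul_cancel₀ _ ht.ne']
    module
  rw [hcomb] at key
  have h1 : g (x + s • v) ≤ (1 - s/t) * g x + (s/t) * g (x + t • v) := key
  rw [DQ, DQ, div_le_div_iff₀ hs ht]
  have h3 := mul_le_mul_of_nonneg_left h1 ht.le
  have h4 : t * (s / t) = s := by field_simp
  have h5 : t * ((1 - s/t) * g x + (s/t) * g (x + t • v))
      = t * g x - (t*(s/t)) * g x + (t*(s/t)) * g (x + t • v) := by ring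
  rw [h4] at h5
  linarith [h3, h5.le, h5.ge]

theorem DQ_lb {g : E → ℝ} (hg : ConvexOn ℝ Set.univ g) (x v : E) {t : ℝ} (ht : 0 < t) :
    g x - g (x + (-1 : ℝ) • v) ≤ DQ g x v t := by
  have h1t : (0:ℝ) < 1 + t := by positivity
  have ha : (0:ℝ) ≤ t / (1 + t) := by positivity
  have hb : (0:ℝ) ≤ 1 / (1 + t) := by positivity
  have hab : t / (1 + t) + 1 / (1 + t) = 1 := by
    rw [← add_div]; rw [show t + 1 = 1 + t by ring]; exact div_self h1t.ne'
  have key := hg.2 (mem_univ (x + (-1:ℝ) • v)) (mem_univ (x + t • v)) ha hb hab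
  have hcomb : (t / (1+t)) • (x + (-1:ℝ) • v) + (1 / (1+t)) • (x + t • v) = x := by
    match_scalars <;> (field_simp; try ring)
  rw [hcomb] at key
  have h1 : g x ≤ (t/(1+t)) * g (x + (-1:ℝ) • v) + (1/(1+t)) * g (x + t • v) := key
  rw [DQ, le_div_iff₀ ht]
  have h3 := mul_le_mul_of_nonneg_left h1 h1t.le
  have h4 : (1+t) * (t / (1+t)) = t := by field_simp
  have h5 : (1+t) * (1 / (1+t)) = 1 := by field_simp
  have h6 : (1+t) * ((t/(1+t)) * g (x + (-1:ℝ) • v) + (1/(1+t)) * g (x + t • v))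
      = ((1+t) * (t/(1+t))) * g (x + (-1:ℝ) • v) + ((1+t) * (1/(1+t))) * g (x + t • v) := by
    ring
  rw [h4, h5] at h6
  linarith [h3, h6.le, h6.ge]

noncomputable def pfun (g : E → ℝ) (x v : E) : ℝ := sInf (DQ g x v '' Set.Ioi 0)

theorem DQ_image_nonempty (g : E → ℝ) (x v : E) : (DQ g x v '' Set.Ioi 0).Nonempty :=
  ⟨DQ g x v 1, 1, by norm_num, rfl⟩

theorem DQ_bddBelow {g : E → ℝ} (hg : ConvexOn ℝ Set.univ g) (x v : E) :
    BddBelow (DQ g x v '' Set.Ioi 0) := by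
  refine ⟨g x - g (x + (-1:ℝ) • v), ?_⟩
  rintro y ⟨t, ht, rfl⟩
  exact DQ_lb hg x v ht

theorem pfun_le_DQ {g : E → ℝ} (hg : ConvexOn ℝ Set.univ g) (x v : E) {t : ℝ} (ht : 0 < t) :
    pfun g x v ≤ DQ g x v t :=
  csInf_le (DQ_bddBelow hg x v) ⟨t, ht, rfl⟩

theorem le_pfun {g : E → ℝ} (x v : E) {r : ℝ} (hr : ∀ t : ℝ, 0 < t → r ≤ DQ g x v t) :
    r ≤ pfun g x v :=
  le_csInf (DQ_image_nonempty g x v) (by rintro y ⟨t, ht, rfl⟩; exact hr t ht)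

theorem pfun_zero (g : E → ℝ) (x : E) : pfun g x 0 = 0 := by
  have h : DQ g x 0 '' Set.Ioi 0 = {0} := by
    ext y
    constructor
    · rintro ⟨t, ht, rfl⟩
      simp [DQ]
    · rintro rfl
      exact ⟨1, by norm_num, by simp [DQ]⟩
  rw [pfun, h, csInf_singleton]

theorem pfun_smul {g : E → ℝ} (x v : E) {c : ℝ} (hc : 0 < c) :
    pfun g x (c • v) = c * pfun g x v := by
  have himg : DQ g x (c • v) '' Set.Ioi 0 = c • (DQ g x v '' Set.Ioi 0) := by
    ext y
    constructor
    · rintro ⟨t, ht, rfl⟩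
      refine ⟨DQ g x v (t * c), ⟨t * c, mul_pos ht hc, rfl⟩, ?_⟩
      show c • DQ g x v (t * c) = DQ g x (c • v) t
      rw [smul_eq_mul, DQ, DQ, smul_smul, mul_comm t c, ← mul_div_assoc,
        mul_div_mul_left _ _ hc.ne']
    · rintro ⟨y', ⟨s, hs, rfl⟩, rfl⟩
      refine ⟨s / c, div_pos hs hc, ?_⟩
      simp only [smul_eq_mul, DQ, smul_smul, div_mul_cancel₀ _ hc.ne']
      rw [div_div_eq_mul_div, mul_comm]
      rw [mul_div_assoc]
  rw [pfun, pfun, himg, Real.sInf_smul_of_nonneg hc.le, smul_eq_mul]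

theorem DQ_half_add {g : E → ℝ} (hg : ConvexOn ℝ Set.univ g) (x u v : E) {t : ℝ} (ht : 0 < t) :
    DQ g x (u + v) t ≤ DQ g x u (2*t) + DQ g x v (2*t) := by
  have key := hg.2 (mem_univ (x + (2*t) • u)) (mem_univ (x + (2*t) • v))
    (by norm_num : (0:ℝ) ≤ 1/2) (by norm_num : (0:ℝ) ≤ 1/2) (by norm_num)
  have hcomb : (1/2 : ℝ) • (x + (2*t) • u) + (1/2 : ℝ) • (x + (2*t) • v) = x + t • (u + v) := by
    match_scalars <;> ring
  rw [hcomb] at key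
  have h1 : g (x + t • (u+v)) ≤ (1/2) * g (x + (2*t) • u) + (1/2) * g (x + (2*t) • v) := key
  rw [DQ, DQ, DQ, ← add_div, div_le_div_iff₀ ht (by positivity)]
  nlinarith [h1]

theorem pfun_add {g : E → ℝ} (hg : ConvexOn ℝ Set.univ g) (x u v : E) :
    pfun g x (u + v) ≤ pfun g x u + pfun g x v := by
  refine le_of_forall_pos_le_add fun ε hε => ?_
  obtain ⟨y1, ⟨t1, ht1, rfl⟩, hy1⟩ :=
    exists_lt_of_csInf_lt (DQ_image_nonempty g x u) (lt_add_of_pos_right (pfun g x u) (half_pos hε))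
  obtain ⟨y2, ⟨t2, ht2, rfl⟩, hy2⟩ :=
    exists_lt_of_csInf_lt (DQ_image_nonempty g x v) (lt_add_of_pos_right (pfun g x v) (half_pos hε))
  set t := min t1 t2 with htdef
  have ht : 0 < t := lt_min ht1 ht2
  have h1 : pfun g x (u+v) ≤ DQ g x (u+v) (t/2) := pfun_le_DQ hg x _ (by positivity)
  have h2 : DQ g x (u+v) (t/2) ≤ DQ g x u t + DQ g x v t := by
    have := DQ_half_add hg x u v (t := t/2) (by positivity)
    rwa [show 2 * (t/2) = t by ring] at this
  have h3 : DQ g x u t ≤ DQ g x u t1 := DQ_mono hg x u ht (min_le_left _ _)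
  have h4 : DQ g x v t ≤ DQ g x v t2 := DQ_mono hg x v ht (min_le_right _ _)
  linarith

theorem pfun_le_sub {g : E → ℝ} (hg : ConvexOn ℝ Set.univ g) (x v : E) :
    pfun g x v ≤ g (x + v) - g x := by
  have := pfun_le_DQ hg x v (t := 1) one_pos
  simpa [DQ] using this

theorem pfun_neg_add_nonneg {g : E → ℝ} (hg : ConvexOn ℝ Set.univ g) (x v : E) :
    0 ≤ pfun g x v + pfun g x (-v) := by
  have h := pfun_add hg x v (-v)
  rw [add_neg_cancel, pfun_zero] at h
  linarith

theorem exists_subgrad [FiniteDimensional ℝ E] {g : E → ℝ} (hg : ConvexOn ℝ Set.univ g)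
    (x d : E) (r : ℝ) (hr : ∀ t : ℝ, 0 < t → r ≤ DQ g x d t) :
    ∃ φ : StrongDual ℝ E, φ ∈ subdiff g x ∧ r ≤ φ d := by
  have hrp : r ≤ pfun g x d := le_pfun x d hr
  -- construct the partial linear map
  by_cases hd : d = 0
  · -- degenerate case
    have f : E →ₗ.[ℝ] ℝ := LinearPMap.mkSpanSingleton' (0 : E) (0 : ℝ) (fun c _ => smul_zero c)
    obtain ⟨φₗ, -, hφle⟩ := exists_extension_of_le_sublinear
      (LinearPMap.mkSpanSingleton' (0 : E) (0 : ℝ) (fun c _ => smul_zero c)) (pfun g x)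
      (fun c hc v => pfun_smul x v hc) (fun u v => pfun_add hg x u v)
      (by
        rintro ⟨z, hz⟩
        have hz' : z ∈ Submodule.span ℝ {(0:E)} := hz
        rw [Submodule.span_zero_singleton, Submodule.mem_bot] at hz'
        subst hz'
        have h0 : (⟨(0:E), hz⟩ : (LinearPMap.mkSpanSingleton' (0 : E) (0 : ℝ)
            (fun c _ => smul_zero c)).domain) = 0 := rfl
        rw [h0, LinearPMap.map_zero]
        simp [pfun_zero])
    refine ⟨LinearMap.toContinuousLinearMap φₗ, fun y => ?_, ?_⟩
    · have := hφle (y - x)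
      have h2 := pfun_le_sub hg x (y - x)
      simp only [LinearMap.coe_toContinuousLinearMap'] at *
      have : φₗ (y - x) ≤ g (x + (y - x)) - g x := le_trans this h2
      rw [add_sub_cancel] at this
      linarith
    · subst hd
      simp only [LinearMap.coe_toContinuousLinearMap', map_zero]
      have := hr 1 one_pos
      simp only [DQ, one_smul, smul_zero, add_zero, sub_self, zero_div] at this
      linarith
  · set f := (LinearPMap.mkSpanSingleton (K := ℝ) d (pfun g x d) hd : E →ₗ.[ℝ] ℝ) with hfdef
    obtain ⟨φₗ, hφf, hφle⟩ := exists_extension_of_le_sublinear f (pfun g x)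
      (fun c hc v => pfun_smul x v hc) (fun u v => pfun_add hg x u v)
      (by
        rintro ⟨z, hz⟩
        have hz' : z ∈ Submodule.span ℝ {d} := hz
        rw [Submodule.mem_span_singleton] at hz'
        obtain ⟨c, rfl⟩ := hz'
        have happ : f ⟨c • d, hz⟩ = c • pfun g x d :=
          LinearPMap.mkSpanSingleton'_apply _ _ _ c hz
        rw [happ]
        show c • pfun g x d ≤ pfun g x (c • d)
        rcases lt_trichotomy c 0 with hc | hc | hc
        · have h1 : c • d = (-c) • (-d) := by module
          rw [h1, pfun_smul x (-d) (by linarith)]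
          have h2 := pfun_neg_add_nonneg hg x d
          have : 0 ≤ pfun g x d + pfun g x (-d) := h2
          simp only [smul_eq_mul]
          nlinarith
        · subst hc; simp [pfun_zero]
        · rw [pfun_smul x d hc]; simp [smul_eq_mul])
    refine ⟨LinearMap.toContinuousLinearMap φₗ, fun y => ?_, ?_⟩
    · have := hφle (y - x)
      have h2 := pfun_le_sub hg x (y - x)
      simp only [LinearMap.coe_toContinuousLinearMap'] at *
      have h3 : φₗ (y - x) ≤ g (x + (y - x)) - g x := le_trans this h2
      rw [add_sub_cancel] at h3
      linarith
    · have hmem : d ∈ f.domain := Submodule.mem_span_singleton_self d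
      have := hφf ⟨d, hmem⟩
      rw [LinearPMap.mkSpanSingleton_apply] at this
      simp only [LinearMap.coe_toContinuousLinearMap']
      rw [this]
      exact hrp

theorem subdiff_convex (g : E → ℝ) (x : E) : Convex ℝ (subdiff g x) := by
  intro φ hφ χ hχ a b ha hb hab
  intro y
  have h1 := hφ y
  have h2 := hχ y
  have : (a • φ + b • χ) (y - x) = a * φ (y - x) + b * χ (y - x) := by simp
  rw [this]
  have hgx : g x = a * g x + b * g x := by rw [← add_mul, hab, one_mul]
  have hgy : g y = a * g y + b * g y := by rw [← add_mul, hab, one_mul]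
  linarith [mul_le_mul_of_nonneg_left h1 ha, mul_le_mul_of_nonneg_left h2 hb]

theorem subdiff_closed (g : E → ℝ) (x : E) : IsClosed (subdiff g x) := by
  have : subdiff g x = ⋂ y : E, {ψ : StrongDual ℝ E | g x + ψ (y - x) ≤ g y} := by
    ext ψ; simp [subdiff, Set.mem_iInter]
  rw [this]
  refine isClosed_iInter fun y => ?_
  have hcont : Continuous fun ψ : StrongDual ℝ E => g x + ψ (y - x) :=
    continuous_const.add (inclusionInDoubleDual ℝ E (y - x)).continuous
  exact isClosed_le hcont continuous_const

theorem subdiff_bounded [FiniteDimensional ℝ E] {g : E → ℝ} (hgc : Continuous g) (x : E) :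
    ∃ C : ℝ, 0 ≤ C ∧ ∀ φ ∈ subdiff g x, ‖φ‖ ≤ C := by
  obtain ⟨z, -, hz⟩ := (isCompact_closedBall x 1).exists_isMaxOn
    (Metric.nonempty_closedBall.2 one_pos.le) hgc.continuousOn
  set C := max 0 (g z - g x) with hC
  refine ⟨C, le_max_left _ _, fun φ hφ => ?_⟩
  have key : ∀ u : E, ‖u‖ ≤ 1 → φ u ≤ C := by
    intro u hu
    have h1 := hφ (x + u)
    rw [add_sub_cancel_left] at h1
    have h2 : x + u ∈ Metric.closedBall x 1 := by
      simp [dist_eq_norm, hu]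
    have : g (x + u) ≤ g z := hz h2
    calc φ u ≤ g (x + u) - g x := by linarith
    _ ≤ g z - g x := by linarith
    _ ≤ C := le_max_right _ _
  refine ContinuousLinearMap.opNorm_le_bound φ (le_max_left _ _) fun v => ?_
  rcases eq_or_ne v 0 with rfl | hv
  · simp
  · have hnv : 0 < ‖v‖ := norm_pos_iff.2 hv
    set u := ‖v‖⁻¹ • v with hu
    have hun : ‖u‖ ≤ 1 := by
      rw [hu, norm_smul, norm_inv, norm_norm, inv_mul_cancel₀ hnv.ne']
    have h1 : φ u ≤ C := key u hun
    have h2 : φ (-u) ≤ C := key (-u) (by rwa [norm_neg])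
    have h3 : |φ u| ≤ C := by
      rw [abs_le]
      constructor
      · have : -(φ u) = φ (-u) := by simp
        linarith [h2, this.ge, this.le]
      · exact h1
    have h4 : φ v = ‖v‖ * φ u := by
      rw [hu, map_smul]
      simp [smul_eq_mul]
      field_simp
    rw [Real.norm_eq_abs, h4, abs_mul, abs_of_nonneg hnv.le, mul_comm]
    exact mul_le_mul_of_nonneg_right h3 hnv.le

theorem subdiff_isCompact [FiniteDimensional ℝ E] {g : E → ℝ} (hgc : Continuous g) (x : E) :
    IsCompact (subdiff g x) := by
  obtain ⟨C, hC0, hC⟩ := subdiff_bounded hgc x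
  have hFD : FiniteDimensional ℝ (StrongDual ℝ E) := by
    have e := (LinearMap.toContinuousLinearMap : (E →ₗ[ℝ] ℝ) ≃ₗ[ℝ] (E →L[ℝ] ℝ))
    exact Module.Finite.equiv e
  refine Metric.isCompact_of_isClosed_isBounded (subdiff_closed g x) ?_
  refine (Metric.isBounded_closedBall (x := (0 : StrongDual ℝ E)) (r := C)).subset fun φ hφ => ?_
  rw [Metric.mem_closedBall, dist_zero_right]
  exact hC φ hφ

theorem doubleDual_surjective (E : Type*) [NormedAddCommGroup E] [NormedSpace ℝ E]
    [FiniteDimensional ℝ E] :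
    Function.Surjective (inclusionInDoubleDual ℝ E) := by
  have hFD : FiniteDimensional ℝ (StrongDual ℝ E) :=
    Module.Finite.equiv (LinearMap.toContinuousLinearMap : (E →ₗ[ℝ] ℝ) ≃ₗ[ℝ] (E →L[ℝ] ℝ))
  have hFD2 : FiniteDimensional ℝ (StrongDual ℝ (StrongDual ℝ E)) :=
    Module.Finite.equiv
      (LinearMap.toContinuousLinearMap : (StrongDual ℝ E →ₗ[ℝ] ℝ) ≃ₗ[ℝ] (StrongDual ℝ E →L[ℝ] ℝ))
  have hdim1 : Module.finrank ℝ (StrongDual ℝ E) = Module.finrank ℝ E := by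
    rw [← (LinearMap.toContinuousLinearMap :
      (E →ₗ[ℝ] ℝ) ≃ₗ[ℝ] (E →L[ℝ] ℝ)).finrank_eq]
    exact Subspace.dual_finrank_eq
  have hdim2 : Module.finrank ℝ (StrongDual ℝ (StrongDual ℝ E)) = Module.finrank ℝ (StrongDual ℝ E) := by
    rw [← (LinearMap.toContinuousLinearMap :
      (StrongDual ℝ E →ₗ[ℝ] ℝ) ≃ₗ[ℝ] (StrongDual ℝ E →L[ℝ] ℝ)).finrank_eq]
    exact Subspace.dual_finrank_eq
  have hinj : Function.Injective (inclusionInDoubleDual ℝ E) := by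
    have : Function.Injective (inclusionInDoubleDualLi ℝ (E := E)) :=
      (inclusionInDoubleDualLi ℝ (E := E)).injective
    exact this
  have hdim : Module.finrank ℝ E = Module.finrank ℝ (StrongDual ℝ (StrongDual ℝ E)) := by
    rw [hdim2, hdim1]
  exact ((inclusionInDoubleDual ℝ E).toLinearMap.injective_iff_surjective_of_finrank_eq_finrank
    hdim).1 hinj

theorem convexHull_iUnion_eq {ι : Type*} [Fintype ι] {F : Type*} [NormedAddCommGroup F]
    [NormedSpace ℝ F] (S : ι → Set F) (hne : ∀ i, (S i).Nonempty) (hconv : ∀ i, Convex ℝ (S i)) :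
    convexHull ℝ (⋃ i, S i) =
      (fun q : (ι → ℝ) × (ι → F) => ∑ i, q.1 i • q.2 i) '' ((stdSimplex ℝ ι) ×ˢ Set.univ.pi S) := by
  apply le_antisymm
  · apply convexHull_min
    · -- union ⊆ image
      rintro y ⟨_, ⟨i, rfl⟩, hy⟩
      classical
      refine ⟨⟨fun k => if k = i then 1 else 0, Function.update (fun k => (hne k).some) i y⟩,
        ⟨⟨fun k => by dsimp; split <;> norm_num, by simp⟩, fun k _ => ?_⟩, ?_⟩
      · dsimp
        rcases eq_or_ne k i with rfl | hk
        · rw [Function.update_self]; exact hy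
        · rw [Function.update_of_ne hk]; exact (hne k).some_mem
      · dsimp
        have hterm : ∀ k : ι, (if k = i then (1:ℝ) else 0) • Function.update
            (fun k => (hne k).some) i y k = if k = i then Function.update
            (fun k => (hne k).some) i y k else 0 := by
          intro k; split <;> simp
        rw [Finset.sum_congr rfl fun k _ => hterm k, Finset.sum_ite_eq' Finset.univ i]
        simp
    · -- image convex
      rintro p₁ ⟨⟨w, z⟩, ⟨hw, hz⟩, rfl⟩ p₂ ⟨⟨w', z'⟩, ⟨hw', hz'⟩, rfl⟩ a b ha hb hab
      classical
      set w'' : ι → ℝ := fun k => a * w k + b * w' k with hw''def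
      have hw''nonneg : ∀ k, 0 ≤ w'' k := fun k =>
        add_nonneg (mul_nonneg ha (hw.1 k)) (mul_nonneg hb (hw'.1 k))
      set z'' : ι → F := fun k =>
        if h : w'' k = 0 then (hne k).some
        else ((a * w k) / w'' k) • z k + ((b * w' k) / w'' k) • z' k with hz''def
      refine ⟨⟨w'', z''⟩, ⟨⟨hw''nonneg, ?_⟩, fun k _ => ?_⟩, ?_⟩
      · simp only [hw''def]
        rw [Finset.sum_add_distrib, ← Finset.mul_sum, ← Finset.mul_sum, hw.2, hw'.2]
        linarith
      · dsimp only
        rw [hz''def]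
        dsimp only
        split
        · exact (hne k).some_mem
        · rename_i hwk
          refine hconv k (hz k (mem_univ k)) (hz' k (mem_univ k))
            (div_nonneg (mul_nonneg ha (hw.1 k)) (hw''nonneg k))
            (div_nonneg (mul_nonneg hb (hw'.1 k)) (hw''nonneg k)) ?_
          rw [← add_div]
          exact div_self hwk
      · dsimp only
        have : ∀ k, w'' k • z'' k = (a * w k) • z k + (b * w' k) • z' k := by
          intro k
          rw [hz''def]
          dsimp only
          split
          · rename_i hwk
            have hsum : a * w k + b * w' k = 0 := hwk
            have h1 : a * w k = 0 ∧ b * w' k = 0 := by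
              constructor <;>
                nlinarith [mul_nonneg ha (hw.1 k), mul_nonneg hb (hw'.1 k)]
            rw [hwk, h1.1, h1.2]
            simp
          · rename_i hwk
            rw [smul_add, smul_smul, smul_smul, mul_div_cancel₀ _ hwk, mul_div_cancel₀ _ hwk]
        rw [Finset.sum_congr rfl fun k _ => this k, Finset.sum_add_distrib]
        rw [Finset.smul_sum, Finset.smul_sum]
        congr 1 <;> exact Finset.sum_congr rfl fun k _ => by rw [smul_smul]
  · -- image ⊆ convexHull
    rintro y ⟨⟨w, z⟩, ⟨hw, hz⟩, rfl⟩
    have := Finset.univ.centerMass_mem_convexHull (w := w) (z := z)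
      (fun i _ => hw.1 i) (by rw [hw.2]; norm_num)
      (fun i _ => Set.mem_iUnion.2 ⟨i, hz i (mem_univ i)⟩)
    rwa [Finset.centerMass_eq_of_sum_1 _ _ hw.2] at this

theorem isCompact_convexHull_iUnion {ι : Type*} [Fintype ι] {F : Type*} [NormedAddCommGroup F]
    [NormedSpace ℝ F] (S : ι → Set F) (hne : ∀ i, (S i).Nonempty) (hconv : ∀ i, Convex ℝ (S i))
    (hcomp : ∀ i, IsCompact (S i)) : IsCompact (convexHull ℝ (⋃ i, S i)) := by
  rw [convexHull_iUnion_eq S hne hconv]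
  refine ((isCompact_stdSimplex ℝ ι).prod (isCompact_univ_pi hcomp)).image ?_
  exact continuous_finset_sum _ fun i _ =>
    ((continuous_apply i).comp continuous_fst).smul ((continuous_apply i).comp continuous_snd)

end Aux

open Set Pointwise Filter in
/-- **Max rule for subdifferentials** (Dubovitskii–Milman): the subdifferential of a
finite maximum of convex continuous functions is the convex hull of the
subdifferentials of the active functions. -/
theorem subdiff_max_rule
    (E : Type*) [NormedAddCommGroup E] [NormedSpace ℝ E] [FiniteDimensional ℝ E]
    (m : ℕ) (hm : 0 < m) (g : Fin m → E → ℝ)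
    (hconv : ∀ j, ConvexOn ℝ Set.univ (g j))
    (hcont : ∀ j, Continuous (g j))
    (G : E → ℝ) (hne : (Finset.univ : Finset (Fin m)).Nonempty)
    (hG : ∀ x, G x = Finset.univ.sup' hne (fun j => g j x))
    (x : E) :
    subdiff G x =
      convexHull ℝ (⋃ j ∈ {j : Fin m | g j x = G x}, subdiff (g j) x) := by
  classical
  have hle : ∀ j (y : E), g j y ≤ G y := fun j y =>
    (hG y) ▸ Finset.le_sup' (fun j => g j y) (Finset.mem_univ j)
  have hattain : ∀ y : E, ∃ j, g j y = G y := fun y => by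
    obtain ⟨j, -, hj⟩ := Finset.exists_mem_eq_sup' hne (fun j => g j y)
    exact ⟨j, ((hG y) ▸ hj).symm⟩
  apply le_antisymm
  swap
  · -- easy direction
    apply convexHull_min
    · rintro φ hφ
      simp only [mem_iUnion, mem_setOf_eq] at hφ
      obtain ⟨j, hjx, hφ⟩ := hφ
      intro y
      calc G x + φ (y - x) = g j x + φ (y - x) := by rw [hjx]
        _ ≤ g j y := hφ y
        _ ≤ G y := hle j y
    · exact subdiff_convex G x
  · -- hard direction
    intro ψ hψ
    by_contra hψK
    obtain ⟨j₀, hj₀⟩ := hattain x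
    set S : Fin m → Set (StrongDual ℝ E) := fun j =>
      if g j x = G x then subdiff (g j) x else subdiff (g j₀) x with hSdef
    have hU : (⋃ j ∈ {j : Fin m | g j x = G x}, subdiff (g j) x) = ⋃ j, S j := by
      ext φ
      simp only [mem_iUnion, mem_setOf_eq, hSdef]
      constructor
      · rintro ⟨j, hj, hφ⟩
        exact ⟨j, by rw [if_pos hj]; exact hφ⟩
      · rintro ⟨j, hφ⟩
        by_cases hj : g j x = G x
        · rw [if_pos hj] at hφ; exact ⟨j, hj, hφ⟩
        · rw [if_neg hj] at hφ; exact ⟨j₀, hj₀, hφ⟩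
    rw [hU] at hψK
    have hSne : ∀ j, (S j).Nonempty := by
      intro j
      have h0 : ∀ (k : Fin m), (subdiff (g k) x).Nonempty := by
        intro k
        obtain ⟨φ, hφ, -⟩ := exists_subgrad (hconv k) x 0 0
          (fun t ht => by simp [DQ])
        exact ⟨φ, hφ⟩
      rw [hSdef]; dsimp only; split <;> exact h0 _
    have hSconv : ∀ j, Convex ℝ (S j) := by
      intro j; rw [hSdef]; dsimp only; split <;> exact subdiff_convex _ x
    have hScomp : ∀ j, IsCompact (S j) := by
      intro j; rw [hSdef]; dsimp only; split <;> exact subdiff_isCompact (hcont _) x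
    have hK : IsCompact (convexHull ℝ (⋃ j, S j)) :=
      isCompact_convexHull_iUnion S hSne hSconv hScomp
    obtain ⟨f, u, hfK, hfψ⟩ := geometric_hahn_banach_closed_point
      (convex_convexHull ℝ _) hK.isClosed hψK
    obtain ⟨d, hd⟩ := doubleDual_surjective E f
    have hfeval : ∀ φ : StrongDual ℝ E, f φ = φ d := fun φ => by
      rw [← hd]; rfl
    -- the sequence
    set t : ℕ → ℝ := fun n => 1 / (n + 1) with htdef
    have htpos : ∀ n, 0 < t n := fun n => by positivity
    have ht0 : Tendsto t atTop (nhds 0) := tendsto_one_div_add_atTop_nhds_zero_nat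
    choose jf hjf using fun n => hattain (x + t n • d)
    -- pigeonhole
    have hfreq : ∃ j, ∃ᶠ n in atTop, jf n = j := by
      by_contra hcon
      push_neg at hcon
      have : ∀ j, ∀ᶠ n in atTop, jf n ≠ j := fun j => hcon j
      have hall : ∀ᶠ n in atTop, ∀ j, jf n ≠ j := eventually_all.2 this
      obtain ⟨n, hn⟩ := hall.exists
      exact hn (jf n) rfl
    obtain ⟨j, hj⟩ := hfreq
    -- j is active
    have htendx : Tendsto (fun n => x + t n • d) atTop (nhds x) := by
      have h1 : Tendsto (fun n => t n • d) atTop (nhds ((0:ℝ) • d)) := ht0.smul_const d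
      rw [zero_smul] at h1
      simpa using tendsto_const_nhds.add h1
    have hjactive : g j x = G x := by
      have hkle : ∀ k, g k x ≤ g j x := by
        intro k
        by_contra hlt
        push_neg at hlt
        have htendF : Tendsto (fun n => g j (x + t n • d) - g k (x + t n • d)) atTop
            (nhds (g j x - g k x)) :=
          ((hcont j).continuousAt.tendsto.comp htendx).sub
            ((hcont k).continuousAt.tendsto.comp htendx)
        have hev : ∀ᶠ n in atTop, g j (x + t n • d) - g k (x + t n • d) < 0 :=
          htendF.eventually_lt_const (by linarith)
        obtain ⟨n, hjn, hn⟩ := (hj.and_eventually hev).exists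
        have : g k (x + t n • d) ≤ g j (x + t n • d) := by
          have h5 := hjf n
          rw [hjn] at h5
          rw [h5]
          exact hle k _
        linarith
      refine le_antisymm (hle j x) ?_
      rw [hG x]
      exact Finset.sup'_le hne _ fun k _ => hkle k
    -- subgradient inequality along d
    have hr : ∀ s : ℝ, 0 < s → ψ d ≤ DQ (g j) x d s := by
      intro s hs
      have hev : ∀ᶠ n in atTop, t n < s := ht0.eventually_lt_const hs
      obtain ⟨n, hjn, hn⟩ := (hj.and_eventually hev).exists
      have h1 : ψ d ≤ DQ (g j) x d (t n) := by
        have h2 := hψ (x + t n • d)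
        rw [add_sub_cancel_left, map_smul] at h2
        have h3 : g j (x + t n • d) = G (x + t n • d) := by
          rw [← hjn]; exact hjf n
        rw [DQ, le_div_iff₀ (htpos n)]
        have h4 : G x = g j x := hjactive.symm
        rw [smul_eq_mul] at h2
        nlinarith [h2, h3.ge, h3.le, h4.le, h4.ge]
      exact h1.trans (DQ_mono (hconv j) x d (htpos n) hn.le)
    obtain ⟨φ, hφmem, hφd⟩ := exists_subgrad (hconv j) x d (ψ d) hr
    have hφK : φ ∈ convexHull ℝ (⋃ j, S j) := by
      apply subset_convexHull
      refine mem_iUnion.2 ⟨j, ?_⟩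
      rw [hSdef]; dsimp only; rw [if_pos hjactive]; exact hφmem
    have := hfK φ hφK
    rw [hfeval φ] at this
    rw [hfeval ψ] at hfψ
    linarith
end

section
/- For the Euclidean space ℝ^d (any d), the sequence r_k = 1/√k is a Helly approximation sequence: if 𝓕 is a finite family of convex sets such that every k of them have a common point in the unit ball, then some point is within distance 1/√k of every member of 𝓕. -/
open Metric Finset RealInnerProductSpace

/-- Derandomized Maurey sampling: from a mean-zero convex combination of unit vectors,
one can greedily pick `m` of them (with repetition) whose sum `s` satisfies
`a * ⟪s, x⟫ + ‖s‖ ^ 2 ≤ m`. -/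
lemma abmt_greedy {E : Type*} [NormedAddCommGroup E] [InnerProductSpace ℝ E]
    (T : Finset E) (w : E → ℝ) (hw0 : ∀ v ∈ T, 0 ≤ w v) (hw1 : ∑ v ∈ T, w v = 1)
    (hwc : ∑ v ∈ T, w v • v = 0) (hnorm : ∀ v ∈ T, ‖v‖ = 1) (x : E) (a : ℝ) :
    ∀ m : ℕ, ∃ c : Fin m → E, (∀ j, c j ∈ T) ∧
      a * ⟪∑ j, c j, x⟫ + ‖∑ j, c j‖ ^ 2 ≤ m := by
  intro m
  induction m with
  | zero =>
    refine ⟨fun j => j.elim0, fun j => j.elim0, ?_⟩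
    simp
  | succ m ih =>
    obtain ⟨c, hcT, hG⟩ := ih
    set s : E := ∑ j, c j with hs
    -- find a good next vector
    have key : ∃ v ∈ T, a * ⟪v, x⟫ + 2 * ⟪s, v⟫ + ‖v‖ ^ 2 ≤ 1 := by
      by_contra hcon
      push_neg at hcon
      have hexpos : ∃ v ∈ T, 0 < w v := by
        by_contra h
        push_neg at h
        have : ∑ v ∈ T, w v ≤ 0 := Finset.sum_nonpos h
        linarith [hw1 ▸ this]
      obtain ⟨v₀, hv₀T, hv₀⟩ := hexpos
      have hlt : ∑ v ∈ T, w v * 1 < ∑ v ∈ T, w v * (a * ⟪v, x⟫ + 2 * ⟪s, v⟫ + ‖v‖ ^ 2) := by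
        refine Finset.sum_lt_sum (fun v hv => ?_) ⟨v₀, hv₀T, ?_⟩
        · exact mul_le_mul_of_nonneg_left (le_of_lt (hcon v hv)) (hw0 v hv)
        · exact mul_lt_mul_of_pos_left (hcon v₀ hv₀T) hv₀
      have havg : ∑ v ∈ T, w v * (a * ⟪v, x⟫ + 2 * ⟪s, v⟫ + ‖v‖ ^ 2) = 1 := by
        have h1 : ∑ v ∈ T, w v * ⟪v, x⟫ = 0 := by
          have : ⟪∑ v ∈ T, w v • v, x⟫ = (0 : ℝ) := by rw [hwc, inner_zero_left]
          rw [sum_inner] at this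
          simpa [real_inner_smul_left] using this
        have h2 : ∑ v ∈ T, w v * ⟪s, v⟫ = 0 := by
          have : ⟪s, ∑ v ∈ T, w v • v⟫ = (0 : ℝ) := by rw [hwc, inner_zero_right]
          rw [inner_sum] at this
          simpa [real_inner_smul_right] using this
        have h3 : ∀ v ∈ T, w v * (a * ⟪v, x⟫ + 2 * ⟪s, v⟫ + ‖v‖ ^ 2)
            = a * (w v * ⟪v, x⟫) + 2 * (w v * ⟪s, v⟫) + w v := by
          intro v hv; rw [hnorm v hv]; ring
        rw [Finset.sum_congr rfl h3, Finset.sum_add_distrib, Finset.sum_add_distrib,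
          ← Finset.mul_sum, ← Finset.mul_sum, h1, h2, hw1]
        ring
      rw [havg] at hlt
      simp only [mul_one, hw1] at hlt
      exact lt_irrefl _ hlt
    obtain ⟨v, hvT, hv⟩ := key
    refine ⟨Fin.snoc c v, fun j => ?_, ?_⟩
    · refine Fin.lastCases ?_ (fun j => ?_) j
      · simpa using hvT
      · simpa using hcT j
    · have hsum : ∑ j : Fin (m + 1), Fin.snoc c v j = s + v := by
        rw [Fin.sum_univ_castSucc]
        simp [hs]
      rw [hsum]
      have hexp : ‖s + v‖ ^ 2 = ‖s‖ ^ 2 + 2 * ⟪s, v⟫ + ‖v‖ ^ 2 := by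
        rw [← real_inner_self_eq_norm_sq, ← real_inner_self_eq_norm_sq,
          ← real_inner_self_eq_norm_sq]
        rw [inner_add_add_self, real_inner_comm v s]
        ring
      rw [inner_add_left, hexp]
      push_cast
      nlinarith [hG, hv]

/-- The final arithmetic contradiction in the no-dimension Helly theorem. -/
lemma abmt_arith {a n r ip s1 : ℝ} (ha : 0 < a) (han : a * a = n)
    (hcon : 1 / a < r) (hG : 2 * a * ip + s1 ^ 2 ≤ n)
    (h1 : n * r ≤ ip + s1) (hs1 : 0 ≤ s1) : False := by
  have hinv : a * (1 / a) = 1 := by field_simp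
  have h2 : 2 * a * s1 ≤ s1 ^ 2 + n := by nlinarith [sq_nonneg (s1 - a)]
  have har : 1 < a * r := by nlinarith [mul_pos ha (sub_pos.2 hcon)]
  have h3 : a < n * r := by nlinarith [mul_lt_mul_of_pos_left har ha]
  have h4 : 2 * a * (n * r) ≤ 2 * a * (ip + s1) :=
    mul_le_mul_of_nonneg_left h1 (by positivity)
  nlinarith [mul_lt_mul_of_pos_left h3 (show (0:ℝ) < 2 * a by positivity)]

theorem no_dim_helly_aux {E : Type*} [NormedAddCommGroup E] [InnerProductSpace ℝ E]
    [FiniteDimensional ℝ E] (k : ℕ) (hk : 0 < k) (𝓕 : Finset (Set E))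
    (hconv : ∀ K ∈ 𝓕, Convex ℝ K)
    (hhelly : ∀ f : Fin k → Set E, (∀ i, f i ∈ 𝓕) →
      (closedBall (0 : E) 1 ∩ ⋂ i, f i).Nonempty) :
    ∃ x : E, ∀ K ∈ 𝓕, infDist x K ≤ 1 / Real.sqrt k := by
  classical
  rcases 𝓕.eq_empty_or_nonempty with rfl | hne
  · exact ⟨0, by simp⟩
  have hk1 : (1 : ℝ) ≤ (k : ℝ) := by exact_mod_cast hk
  have hsq : 0 < Real.sqrt k := Real.sqrt_pos.2 (by linarith)
  have hsqsq : Real.sqrt k * Real.sqrt k = (k : ℝ) := Real.mul_self_sqrt (by linarith)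
  set B : Set E := closedBall (0 : E) 1 with hB
  set C : Set E → Set E := fun K => closure (K ∩ B) with hC
  have hCmem : ∀ K, ∀ p ∈ B, p ∈ K → p ∈ C K := fun K p h1 h2 => subset_closure ⟨h2, h1⟩
  have hCne : ∀ K ∈ 𝓕, (C K).Nonempty := by
    intro K hK
    obtain ⟨p, hp1, hp2⟩ := hhelly (fun _ => K) (fun _ => hK)
    exact ⟨p, hCmem K p hp1 (Set.mem_iInter.1 hp2 ⟨0, hk⟩)⟩
  have hCconv : ∀ K ∈ 𝓕, Convex ℝ (C K) :=
    fun K hK => ((hconv K hK).inter (convex_closedBall _ _)).closure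
  have hCcl : ∀ K, IsClosed (C K) := fun K => isClosed_closure
  have hCB : ∀ K, C K ⊆ B := fun K =>
    closure_minimal Set.inter_subset_right isClosed_closedBall
  have hKC : ∀ K ∈ 𝓕, ∀ x : E, infDist x K ≤ infDist x (C K) := by
    intro K hK x
    have h1 : infDist x (closure K) ≤ infDist x (C K) :=
      infDist_le_infDist_of_subset (closure_mono Set.inter_subset_left) (hCne K hK)
    rwa [infDist_closure] at h1
  set f : E → ℝ := fun x => 𝓕.sup' hne fun K => infDist x (C K) with hf
  have hfc : Continuous f :=
    Continuous.finset_sup'_apply hne fun K _ => continuous_infDist_pt (C K)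
  -- bounds on f
  have hf0 : f 0 ≤ 1 := by
    refine Finset.sup'_le hne _ fun K hK => ?_
    obtain ⟨q, hq⟩ := hCne K hK
    refine (infDist_le_dist_of_mem hq).trans ?_
    have := hCB K hq
    rw [hB, mem_closedBall] at this
    rwa [dist_comm]
  have hlow : ∀ y : E, ‖y‖ - 1 ≤ f y := by
    intro y
    obtain ⟨K₀, hK₀⟩ := hne
    refine le_trans ?_ (Finset.le_sup' (fun K => infDist y (C K)) hK₀)
    obtain ⟨q, hqC, hq⟩ := (hCcl K₀).exists_infDist_eq_dist (hCne K₀ hK₀) y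
    have hq1 : ‖q‖ ≤ 1 := by have := hCB K₀ hqC; rwa [hB, mem_closedBall, dist_zero_right] at this
    have : ‖y‖ - ‖q‖ ≤ dist y q := by
      rw [dist_eq_norm]; linarith [norm_sub_norm_le y q]
    rw [hq]; linarith
  -- a minimizer of `f` over the ball of radius 2, of norm < 2
  obtain ⟨x, hxB2, hxmin, hxlt⟩ :
      ∃ x, x ∈ closedBall (0 : E) 2 ∧ (∀ y ∈ closedBall (0 : E) 2, f x ≤ f y) ∧ ‖x‖ < 2 := by
    obtain ⟨x₀, hx₀B, hx₀min⟩ := (isCompact_closedBall (0 : E) 2).exists_isMinOn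
      ⟨0, mem_closedBall_self (by norm_num)⟩ hfc.continuousOn
    rw [isMinOn_iff] at hx₀min
    by_cases h : f x₀ < 1
    · refine ⟨x₀, hx₀B, hx₀min, ?_⟩
      have := hlow x₀; linarith
    · push_neg at h
      refine ⟨0, mem_closedBall_self (by norm_num), fun y hy => ?_, by simp⟩
      have := hx₀min y hy
      linarith
  set r : ℝ := f x with hr
  -- it suffices to bound r
  have hrmain : r ≤ 1 / Real.sqrt k := by
    by_contra hcon
    push_neg at hcon
    have hrpos : 0 < r := lt_trans (by positivity) hcon
    -- active family
    set 𝓐 : Finset (Set E) := 𝓕.filter (fun K => infDist x (C K) = r) with h𝓐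
    have h𝓐sub : ∀ K ∈ 𝓐, K ∈ 𝓕 := fun K hK => (Finset.mem_filter.1 hK).1
    have h𝓐r : ∀ K ∈ 𝓐, infDist x (C K) = r := fun K hK => (Finset.mem_filter.1 hK).2
    have h𝓐ne : 𝓐.Nonempty := by
      obtain ⟨K, hK, hKeq⟩ := Finset.exists_mem_eq_sup' hne (fun K => infDist x (C K))
      exact ⟨K, Finset.mem_filter.2 ⟨hK, hKeq.symm⟩⟩
    -- nearest points
    have hproj : ∀ K ∈ 𝓐, ∃ q ∈ C K, infDist x (C K) = dist x q := fun K hK =>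
      (hCcl K).exists_infDist_eq_dist (hCne K (h𝓐sub K hK)) x
    choose! p hpmem hpdist using hproj
    have hpd : ∀ K ∈ 𝓐, ‖x - p K‖ = r := fun K hK => by
      rw [← dist_eq_norm, ← hpdist K hK, h𝓐r K hK]
    set u : Set E → E := fun K => r⁻¹ • (x - p K) with hu
    have hun : ∀ K ∈ 𝓐, ‖u K‖ = 1 := by
      intro K hK
      show ‖r⁻¹ • (x - p K)‖ = 1
      rw [norm_smul, hpd K hK, norm_inv, Real.norm_eq_abs, abs_of_pos hrpos,
        inv_mul_cancel₀ (ne_of_gt hrpos)]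
    have hobt : ∀ K ∈ 𝓐, ∀ q ∈ C K, ⟪x - p K, q - p K⟫ ≤ 0 := by
      intro K hK q hq
      have h1 : (⨅ w : C K, ‖x - w‖) = infDist x (C K) := by
        rw [infDist_eq_iInf]; exact iInf_congr fun w => (dist_eq_norm _ _).symm
      have h2 : ‖x - p K‖ = ⨅ w : C K, ‖x - w‖ := by
        rw [h1, hpdist K hK, dist_eq_norm]
      exact (norm_eq_iInf_iff_real_inner_le_zero (hCconv K (h𝓐sub K hK))
        (hpmem K hK)).1 h2 q hq
    have hinner : ∀ K ∈ 𝓐, ∀ q ∈ C K, r ≤ ⟪u K, x - q⟫ := by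
      intro K hK q hq
      have h1 : ⟪x - p K, x - q⟫ = ⟪x - p K, x - p K⟫ - ⟪x - p K, q - p K⟫ := by
        rw [← inner_sub_right]
        congr 1
        abel
      have h2 : ⟪x - p K, x - p K⟫ = r ^ 2 := by
        rw [real_inner_self_eq_norm_sq, hpd K hK]
      have h3 := hobt K hK q hq
      show r ≤ ⟪r⁻¹ • (x - p K), x - q⟫
      rw [real_inner_smul_left, h1, h2]
      have h5 : r ^ 2 ≤ r ^ 2 - ⟪x - p K, q - p K⟫ := by linarith
      have h6 : r⁻¹ * r ^ 2 ≤ r⁻¹ * (r ^ 2 - ⟪x - p K, q - p K⟫) :=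
        mul_le_mul_of_nonneg_left h5 (le_of_lt (inv_pos.2 hrpos))
      have h7 : r⁻¹ * r ^ 2 = r := by field_simp [sq]
      linarith
    -- `0` lies in the convex hull of the unit normals of the active sets
    set T : Finset E := 𝓐.image u with hT
    have hTn : ∀ v ∈ T, ‖v‖ = 1 := by
      intro v hv
      obtain ⟨K, hK, rfl⟩ := Finset.mem_image.1 hv
      exact hun K hK
    have h0 : (0 : E) ∈ convexHull ℝ (T : Set E) := by
      by_contra h0
      obtain ⟨φ, s', hφ0, hφT⟩ := _root_.geometric_hahn_banach_point_closed
        (convex_convexHull ℝ _) (T.finite_toSet.isClosed_convexHull (𝕜 := ℝ)) h0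
      have hs' : 0 < s' := by simpa using hφ0
      set wv : E := (InnerProductSpace.toDual ℝ E).symm φ with hwv
      have hwφ : ∀ y : E, ⟪wv, y⟫ = φ y := fun y => InnerProductSpace.toDual_symm_apply
      have hwu : ∀ K ∈ 𝓐, s' < ⟪wv, u K⟫ := by
        intro K hK
        rw [hwφ]
        exact hφT _ (subset_convexHull ℝ _ (by exact_mod_cast Finset.mem_image_of_mem u hK))
      -- a bound `m < r` for the inactive sets
      obtain ⟨m, hmr, hm⟩ : ∃ m : ℝ, m < r ∧ ∀ K ∈ 𝓕, K ∉ 𝓐 → infDist x (C K) ≤ m := by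
        rcases (𝓕.filter (fun K => K ∉ 𝓐)).eq_empty_or_nonempty with hemp | hne2
        · refine ⟨0, hrpos, fun K hK hK𝓐 => ?_⟩
          have hmemf : K ∈ 𝓕.filter (fun K => K ∉ 𝓐) := Finset.mem_filter.2 ⟨hK, hK𝓐⟩
          rw [hemp] at hmemf
          simp at hmemf
        · refine ⟨(𝓕.filter (fun K => K ∉ 𝓐)).sup' hne2 (fun K => infDist x (C K)), ?_, ?_⟩
          · rw [Finset.sup'_lt_iff]
            intro K hK
            have hK' := Finset.mem_filter.1 hK
            have hle : infDist x (C K) ≤ r :=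
              Finset.le_sup' (fun K => infDist x (C K)) hK'.1
            exact lt_of_le_of_ne hle fun h => hK'.2 (Finset.mem_filter.2 ⟨hK'.1, h⟩)
          · intro K hK h
            exact Finset.le_sup' (fun K => infDist x (C K)) (Finset.mem_filter.2 ⟨hK, h⟩)
      -- choose a small step size
      obtain ⟨t, htpos, ht1, ht2, ht3⟩ : ∃ t : ℝ, 0 < t ∧ t * ‖wv‖ ^ 2 < r * s' ∧
          t * ‖wv‖ ≤ 2 - ‖x‖ ∧ t * ‖wv‖ < r - m := by
        set t : ℝ := min (r * s' / (‖wv‖ ^ 2 + 1))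
          (min ((2 - ‖x‖) / (‖wv‖ + 1)) ((r - m) / (‖wv‖ + 1))) with ht
        have h2x : 0 < 2 - ‖x‖ := by linarith
        have hrm : 0 < r - m := by linarith
        have htpos : 0 < t :=
          lt_min (by positivity) (lt_min (by positivity) (by positivity))
        refine ⟨t, htpos, ?_, ?_, ?_⟩
        · have h := min_le_left (r * s' / (‖wv‖ ^ 2 + 1))
            (min ((2 - ‖x‖) / (‖wv‖ + 1)) ((r - m) / (‖wv‖ + 1)))
          rw [← ht, le_div_iff₀ (by positivity)] at h
          have he : t * (‖wv‖ ^ 2 + 1) = t * ‖wv‖ ^ 2 + t := by ring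
          linarith
        · have h := (min_le_right (r * s' / (‖wv‖ ^ 2 + 1))
            (min ((2 - ‖x‖) / (‖wv‖ + 1)) ((r - m) / (‖wv‖ + 1)))).trans
            (min_le_left ((2 - ‖x‖) / (‖wv‖ + 1)) ((r - m) / (‖wv‖ + 1)))
          rw [← ht, le_div_iff₀ (by positivity)] at h
          have he : t * (‖wv‖ + 1) = t * ‖wv‖ + t := by ring
          linarith
        · have h := (min_le_right (r * s' / (‖wv‖ ^ 2 + 1))
            (min ((2 - ‖x‖) / (‖wv‖ + 1)) ((r - m) / (‖wv‖ + 1)))).trans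
            (min_le_right ((2 - ‖x‖) / (‖wv‖ + 1)) ((r - m) / (‖wv‖ + 1)))
          rw [← ht, le_div_iff₀ (by positivity)] at h
          have he : t * (‖wv‖ + 1) = t * ‖wv‖ + t := by ring
          linarith
      -- the perturbed point improves `f`, contradiction
      have hmem : x - t • wv ∈ closedBall (0 : E) 2 := by
        rw [mem_closedBall_zero_iff]
        calc ‖x - t • wv‖ ≤ ‖x‖ + ‖t • wv‖ := norm_sub_le _ _
          _ = ‖x‖ + t * ‖wv‖ := by
              rw [norm_smul, Real.norm_eq_abs, abs_of_pos htpos]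
          _ ≤ 2 := by linarith
      have hflt : f (x - t • wv) < r := by
        refine (Finset.sup'_lt_iff hne).2 fun K hK => ?_
        by_cases hK𝓐 : K ∈ 𝓐
        · have h1 : infDist (x - t • wv) (C K) ≤ ‖x - p K - t • wv‖ := by
            have := infDist_le_dist_of_mem (x := x - t • wv) (hpmem K hK𝓐)
            rw [dist_eq_norm] at this
            convert this using 2
            · rfl
            abel
          have h3 : r * s' ≤ ⟪x - p K, wv⟫ := by
            have hxp : x - p K = r • u K := by
              show x - p K = r • (r⁻¹ • (x - p K))
              rw [smul_smul, mul_inv_cancel₀ (ne_of_gt hrpos), one_smul]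
            rw [hxp, real_inner_smul_left, real_inner_comm]
            have h := hwu K hK𝓐
            have := mul_le_mul_of_nonneg_left (le_of_lt h) (le_of_lt hrpos)
            linarith
          have h2 : ‖x - p K - t • wv‖ ^ 2
              = r ^ 2 - 2 * t * ⟪x - p K, wv⟫ + t ^ 2 * ‖wv‖ ^ 2 := by
            rw [norm_sub_sq_real, hpd K hK𝓐, real_inner_smul_right, norm_smul,
              Real.norm_eq_abs, abs_of_pos htpos, mul_pow]
            ring
          have h4 : ‖x - p K - t • wv‖ ^ 2 < r ^ 2 := by
            have e1 : 2 * t * (r * s') ≤ 2 * t * ⟪x - p K, wv⟫ := by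
              have := mul_le_mul_of_nonneg_left h3 (le_of_lt htpos)
              linarith
            have e2 : t * (t * ‖wv‖ ^ 2) < t * (r * s') :=
              mul_lt_mul_of_pos_left ht1 htpos
            have e3 : t ^ 2 * ‖wv‖ ^ 2 = t * (t * ‖wv‖ ^ 2) := by ring
            have e4 : 0 < t * (r * s') := by positivity
            rw [h2]
            linarith
          have h5 : ‖x - p K - t • wv‖ < r :=
            lt_of_pow_lt_pow_left₀ 2 (le_of_lt hrpos) h4
          exact lt_of_le_of_lt h1 h5
        · have h1 : infDist (x - t • wv) (C K) ≤ infDist x (C K) + dist (x - t • wv) x :=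
            infDist_le_infDist_add_dist
          have h2 : dist (x - t • wv) x = t * ‖wv‖ := by
            rw [dist_eq_norm]
            have h : x - t • wv - x = -(t • wv) := by abel
            rw [h, norm_neg, norm_smul, Real.norm_eq_abs, abs_of_pos htpos]
          have h3 := hm K hK hK𝓐
          rw [h2] at h1
          linarith
      have := hxmin _ hmem
      linarith
    -- extract the convex combination and run the greedy sampling
    rw [Finset.convexHull_eq] at h0
    obtain ⟨wt, hwt0, hwt1, hwtc⟩ := h0
    have hwtc' : ∑ v ∈ T, wt v • v = 0 := by
      rw [Finset.centerMass_eq_of_sum_1 _ _ hwt1] at hwtc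
      simpa using hwtc
    obtain ⟨c, hcT, hG⟩ := abmt_greedy T wt hwt0 hwt1 hwtc' hTn x (2 * Real.sqrt k) k
    have hgex : ∀ j : Fin k, ∃ K, K ∈ 𝓐 ∧ u K = c j := fun j =>
      Finset.mem_image.1 (hcT j)
    choose g hg𝓐 hgu using hgex
    obtain ⟨q, hqB, hqI⟩ := hhelly g fun j => h𝓐sub _ (hg𝓐 j)
    have hqC : ∀ j, q ∈ C (g j) := fun j => hCmem _ q hqB (Set.mem_iInter.1 hqI j)
    set s : E := ∑ j, c j with hs
    have hsum : (k : ℝ) * r ≤ ⟪s, x - q⟫ := by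
      rw [hs, sum_inner]
      calc (k : ℝ) * r = ∑ _j : Fin k, r := by
            rw [Finset.sum_const, Finset.card_univ, Fintype.card_fin, nsmul_eq_mul]
        _ ≤ ∑ j, ⟪c j, x - q⟫ := Finset.sum_le_sum fun j _ => by
            rw [← hgu j]; exact hinner _ (hg𝓐 j) q (hqC j)
    have hq1 : ‖q‖ ≤ 1 := by rwa [hB, mem_closedBall_zero_iff] at hqB
    have hsq' : |⟪s, q⟫| ≤ ‖s‖ := by
      calc |⟪s, q⟫| ≤ ‖s‖ * ‖q‖ := abs_real_inner_le_norm s q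
        _ ≤ ‖s‖ * 1 := mul_le_mul_of_nonneg_left hq1 (norm_nonneg s)
        _ = ‖s‖ := mul_one _
    have h1 : (k : ℝ) * r ≤ ⟪s, x⟫ + ‖s‖ := by
      rw [inner_sub_right] at hsum
      have := abs_le.1 hsq'
      linarith
    exact abmt_arith hsq hsqsq hcon hG h1 (norm_nonneg s)
  refine ⟨x, fun K hK => ?_⟩
  refine (hKC K hK x).trans (le_trans ?_ hrmain)
  exact Finset.le_sup' (fun K => infDist x (C K)) hK

open Metric

/-- **Adiprasito–Bárány–Mustafa–Terkaj no-dimensional Helly theorem** in Euclidean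
space: `1/√k` is a Helly approximation sequence for `ℝ^d`. -/
theorem euclidean_no_dim_helly
    (d : ℕ) (k : ℕ) (hk : 0 < k)
    (𝓕 : Finset (Set (EuclideanSpace ℝ (Fin d))))
    (hconv : ∀ K ∈ 𝓕, Convex ℝ K)
    (hhelly : ∀ f : Fin k → Set (EuclideanSpace ℝ (Fin d)), (∀ i, f i ∈ 𝓕) →
      (closedBall (0 : EuclideanSpace ℝ (Fin d)) 1 ∩ ⋂ i, f i).Nonempty) :
    ∃ x : EuclideanSpace ℝ (Fin d), ∀ K ∈ 𝓕, infDist x K ≤ 1 / Real.sqrt k := by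
  exact no_dim_helly_aux k hk 𝓕 hconv hhelly
end
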